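/- Let π be an indecomposable 132-avoiding permutation and let λ = Λ(π) be the partition given by its Lehmer code. Then π avoids the pattern 3421 if and only if every part of λ, except possibly the smallest part size, has multiplicity one; equivalently, there do not exist indices i and j with λ_i = λ_{i+1} > λ_j > 0. -/

import Mathlib

/-!
In a 132-avoiding permutation, if `j < k` and `π k < π j` then every entry before `j` lies
above `π k`. Hence the Lehmer code is weakly decreasing, drops strictly at every descent, and
stays constant exactly at the ascents `π i < π (i+1)`. An occurrence of 3421 therefore yields
an ascent between its `3` and `4` whose part `λ_i = λ_{i+1}` exceeds the positive part at the
position of its `2`. Conversely, from an ascent `i, i+1` with `λ_i > λ_j > 0` one finds an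
entry after `i + 1`, below `π i`, that is followed by a smaller entry: together with `i, i+1`
this is a 3421.
-/

/-- A permutation `π` of length `n` (as a bijection of `Fin n`, position `i` has value `π i`)
contains the pattern `p` of length `m` if some subsequence of `π` is order-isomorphic to `p`. -/
def Contains {n m : ℕ} (π : Equiv.Perm (Fin n)) (p : Equiv.Perm (Fin m)) : Prop :=
  ∃ f : Fin m → Fin n, StrictMono f ∧ ∀ a b : Fin m, π (f a) < π (f b) ↔ p a < p b

/-- `π` avoids the pattern `p`. -/
def Avoids {n m : ℕ} (π : Equiv.Perm (Fin n)) (p : Equiv.Perm (Fin m)) : Prop :=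
  ¬ Contains π p

/-- The number of inversions of `π`: pairs of positions `i < j` with `π i > π j`. -/
noncomputable def invCount {n : ℕ} (π : Equiv.Perm (Fin n)) : ℕ :=
  Nat.card {ij : Fin n × Fin n // ij.1 < ij.2 ∧ π ij.2 < π ij.1}

/-- The pattern 132. -/
def p132 : Equiv.Perm (Fin 3) := ⟨![0,2,1], ![0,2,1], by decide, by decide⟩

/-- `π` is indecomposable: it is not the direct sum of two nonempty permutations,
i.e. there is no `0 < d < n` such that the first `d` positions carry the values `0, …, d-1`. -/
def Indecomposable {n : ℕ} (π : Equiv.Perm (Fin n)) : Prop :=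
  ¬ ∃ d : ℕ, 0 < d ∧ d < n ∧ ∀ i : Fin n, (i : ℕ) < d → (π i : ℕ) < d

/-- The Lehmer code of `π` at position `i`: the number of positions `j > i` with
`π j < π i`.  For an indecomposable `132`-avoiding permutation the Lehmer code is
weakly decreasing and its nonzero entries form the partition `Λ(π)` of `inv(π)`. -/
noncomputable def lehmer {n : ℕ} (π : Equiv.Perm (Fin n)) (i : Fin n) : ℕ :=
  Nat.card {j : Fin n // i < j ∧ π j < π i}

/-- The Lehmer code of `π`, extended by zeroes beyond position `n`; for an indecomposable
`132`-avoider this is exactly the partition `λ = Λ(π)` with the convention `λ_i = 0` for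
indices `i` beyond the number of parts (indices are 0-based here). -/
noncomputable def lehmerExt {n : ℕ} (π : Equiv.Perm (Fin n)) (i : ℕ) : ℕ :=
  if h : i < n then lehmer π ⟨i, h⟩ else 0

def p3421 : Equiv.Perm (Fin 4) := ⟨![2,3,1,0], ![3,2,0,1], by decide, by decide⟩

theorem exists_covBy_lt_of_lt {α β : Type*} [LinearOrder α] [SuccOrder α] [IsSuccArchimedean α]
    [LinearOrder β] {f : α → β} {a b : α} (hab : a ≤ b) (h : f a < f b) :
    ∃ i j, a ≤ i ∧ i ⋖ j ∧ j ≤ b ∧ f i < f j := by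
  by_contra! H
  have : AntitoneOn f (Set.Icc a b) := antitoneOn_of_succ_le Set.ordConnected_Icc
    fun i hi hia hib => H i (Order.succ i) hia.1 (Order.covBy_succ_of_not_isMax hi) hib.2
  exact (this ⟨le_rfl, hab⟩ ⟨hab, le_rfl⟩ hab).not_gt h

section
variable {n m : ℕ} (π : Equiv.Perm (Fin n)) {i j : Fin n}

open Finset

theorem contains_iff_exists_strictMono (p : Equiv.Perm (Fin m)) :
    Contains π p ↔ ∃ f : Fin m → Fin n, StrictMono f ∧ StrictMono (π ∘ f ∘ p.symm) := by
  refine exists_congr fun f => and_congr_right fun _ => ⟨fun h u v huv => ?_, fun h a b => ?_⟩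
  · simpa [h] using huv
  · simpa using h.lt_iff_lt (a := p a) (b := p b)

theorem contains_p132 {a b c : Fin n} (hab : a < b) (hbc : b < c) (hac : π a < π c)
    (hcb : π c < π b) : Contains π p132 := by
  refine (contains_iff_exists_strictMono π p132).2 ⟨![a, b, c], ?_, ?_⟩ <;>
    simp [Fin.strictMono_iff_lt_succ, Fin.forall_fin_succ, p132, *]

theorem contains_p3421 {a b c d : Fin n} (hab : a < b) (hbc : b < c) (hcd : c < d)
    (hdc : π d < π c) (hca : π c < π a) (hab' : π a < π b) : Contains π p3421 := by
  refine (contains_iff_exists_strictMono π p3421).2 ⟨![a, b, c, d], ?_, ?_⟩ <;>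
    simp [Fin.strictMono_iff_lt_succ, Fin.forall_fin_succ, p3421, *]

theorem exists_of_contains_p3421 (h : Contains π p3421) :
    ∃ a b c d : Fin n, a < b ∧ b < c ∧ c < d ∧ π d < π c ∧ π c < π a ∧ π a < π b := by
  obtain ⟨f, hf, hv⟩ := (contains_iff_exists_strictMono π p3421).1 h
  refine ⟨f 0, f 1, f 2, f 3, hf (by decide), hf (by decide), hf (by decide), ?_, ?_, ?_⟩
  · simpa [p3421] using hv (show (0 : Fin 4) < 1 by decide)
  · simpa [p3421] using hv (show (1 : Fin 4) < 2 by decide)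
  · simpa [p3421] using hv (show (2 : Fin 4) < 3 by decide)

theorem lehmer_eq_card (i : Fin n) : lehmer π i = #{j | i < j ∧ π j < π i} := by
  rw [lehmer, Nat.card_eq_fintype_card, Fintype.card_subtype]

theorem lehmer_pos_iff : 0 < lehmer π i ↔ ∃ j, i < j ∧ π j < π i := by
  simp [lehmer_eq_card, Finset.card_pos, Finset.filter_nonempty_iff]

theorem lehmer_lt_lehmer (hij : i < j) (hji : π j < π i) : lehmer π j < lehmer π i := by
  rw [lehmer_eq_card, lehmer_eq_card]
  refine Finset.card_lt_card ⟨fun k hk => ?_, fun hsub => ?_⟩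
  · simp only [mem_filter, mem_univ, true_and] at hk ⊢
    exact ⟨hij.trans hk.1, hk.2.trans hji⟩
  · simpa using hsub (by simp [hij, hji] : j ∈ ({k | i < k ∧ π k < π i} : Finset _))

theorem lehmer_le_lehmer (hij : i < j) (hij' : π i < π j)
    (h : ∀ k, i < k → k < j → π i < π k) : lehmer π i ≤ lehmer π j := by
  rw [lehmer_eq_card, lehmer_eq_card]
  refine Finset.card_le_card fun k hk => ?_
  simp only [mem_filter, mem_univ, true_and] at hk ⊢
  refine ⟨lt_of_not_ge fun hkj => ?_, hk.2.trans hij'⟩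
  rcases hkj.lt_or_eq with hkj | rfl
  · exact (h k hk.1 hkj).not_gt hk.2
  · exact hij'.not_gt hk.2

theorem lehmer_le_lehmer_of_covBy (hij : i ⋖ j) (hij' : π i < π j) :
    lehmer π i ≤ lehmer π j :=
  lehmer_le_lehmer π hij.lt hij' fun _ hik hkj => (hij.2 hik hkj).elim

theorem apply_lt_of_avoids_p132 (h132 : Avoids π p132) {k : Fin n} (hij : i < j) (hjk : j < k)
    (hkj : π k < π j) : π k < π i := by
  rcases lt_trichotomy (π k) (π i) with h | h | h
  · exact h
  · exact absurd (π.injective h) (hij.trans hjk).ne'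
  · exact (h132 (contains_p132 π hij hjk h hkj)).elim

theorem lehmer_antitone (h132 : Avoids π p132) : Antitone (lehmer π) := by
  intro i j hij
  rcases hij.lt_or_eq with hij | rfl
  · rw [lehmer_eq_card, lehmer_eq_card]
    refine Finset.card_le_card fun k hk => ?_
    simp only [mem_filter, mem_univ, true_and] at hk ⊢
    exact ⟨hij.trans hk.1, apply_lt_of_avoids_p132 π h132 hij hk.1 hk.2⟩
  · exact le_rfl

theorem exists_plateau_of_contains_p3421 (h132 : Avoids π p132) (h : Contains π p3421) :
    ∃ i i' j : Fin n, i ⋖ i' ∧ lehmer π i = lehmer π i' ∧ lehmer π j < lehmer π i ∧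
      0 < lehmer π j := by
  obtain ⟨a, b, c, d, hab, hbc, hcd, hdc, hca, hab'⟩ := exists_of_contains_p3421 π h
  obtain ⟨i, i', -, hii', hi'b, hv⟩ := exists_covBy_lt_of_lt (f := π) hab.le hab'
  have hic : i < c := hii'.lt.trans_le (hi'b.trans hbc.le)
  have hci : π c < π i :=
    apply_lt_of_avoids_p132 π h132 (hii'.lt.trans_le hi'b) hbc (hca.trans hab')
  exact ⟨i, i', c, hii',
    (lehmer_le_lehmer_of_covBy π hii' hv).antisymm (lehmer_antitone π h132 hii'.le),
    lehmer_lt_lehmer π hic hci, (lehmer_pos_iff π).2 ⟨d, hcd, hdc⟩⟩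

theorem contains_p3421_of_plateau (h132 : Avoids π p132) {i' : Fin n} (hii' : i ⋖ i')
    (heq : lehmer π i = lehmer π i') (hlt : lehmer π j < lehmer π i) (hpos : 0 < lehmer π j) :
    Contains π p3421 := by
  have hv : π i < π i' :=
    (le_of_not_gt fun h => (lehmer_lt_lehmer π hii'.lt h).ne heq.symm).lt_of_ne
      (π.injective.ne hii'.ne)
  have hi'j : i' < j := lt_of_not_ge fun hji' => (heq ▸ hlt).not_ge (lehmer_antitone π h132 hji')
  obtain ⟨k, hjk, hkj⟩ := (lehmer_pos_iff π).1 hpos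
  obtain ⟨m, hi'm, hmk, hkm, hmi⟩ : ∃ m, i' < m ∧ m < k ∧ π k < π m ∧ π m < π i := by
    -- if `π j` is above `π i`, the surplus of `λ_i` over `λ_j` is an entry between `i` and `j`
    rcases lt_or_gt_of_ne (π.injective.ne (hii'.lt.trans hi'j).ne') with hji | hij
    · exact ⟨j, hi'j, hjk, hkj, hji⟩
    obtain ⟨m, him, hmj, hmi⟩ : ∃ m, i < m ∧ m < j ∧ π m < π i := by
      by_contra! H
      exact hlt.not_ge (lehmer_le_lehmer π (hii'.lt.trans hi'j) hij
        fun m him hmj => (H m him hmj).lt_of_ne (π.injective.ne him.ne))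
    have hi'm : i' < m := by
      refine (hii'.ge_of_gt him).lt_of_ne ?_
      rintro rfl
      exact hv.not_gt hmi
    exact ⟨m, hi'm, hmj.trans hjk, apply_lt_of_avoids_p132 π h132 hmj hjk hkj, hmi⟩
  exact contains_p3421 π hii'.lt hi'm hmk hkm hmi hv

theorem lt_of_lehmerExt_pos {i : ℕ} (h : 0 < lehmerExt π i) : i < n := by
  by_contra hi
  simp [lehmerExt, hi] at h

theorem exists_lehmerExt_plateau_iff :
    (∃ i j : ℕ, lehmerExt π i = lehmerExt π (i + 1) ∧ lehmerExt π j < lehmerExt π i ∧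
      0 < lehmerExt π j) ↔
    ∃ i i' j : Fin n, i ⋖ i' ∧ lehmer π i = lehmer π i' ∧ lehmer π j < lehmer π i ∧
      0 < lehmer π j := by
  constructor
  · rintro ⟨i, j, heq, hlt, hpos⟩
    have hj : j < n := lt_of_lehmerExt_pos π hpos
    have hi : i + 1 < n := lt_of_lehmerExt_pos π (heq ▸ hpos.trans hlt)
    refine ⟨⟨i, by omega⟩, ⟨i + 1, hi⟩, ⟨j, hj⟩,
      Fin.covBy_iff.2 (Nat.covBy_iff_add_one_eq.2 rfl), ?_⟩
    simp only [lehmerExt, hi, hj, show i < n by omega, dite_true] at heq hlt hpos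
    exact ⟨heq, hlt, hpos⟩
  · rintro ⟨i, i', j, hii', heq, hlt, hpos⟩
    refine ⟨i, j, ?_⟩
    rw [Nat.covBy_iff_add_one_eq.1 (Fin.covBy_iff.1 hii')]
    simpa [lehmerExt] using ⟨heq, hlt, hpos⟩

end

theorem avoids_3421_iff_general (n : ℕ) (π : Equiv.Perm (Fin n))
    (h132 : Avoids π p132) :
    Avoids π p3421 ↔
      ¬ ∃ i j : ℕ, lehmerExt π i = lehmerExt π (i + 1) ∧
        lehmerExt π j < lehmerExt π i ∧ 0 < lehmerExt π j := by
  rw [exists_lehmerExt_plateau_iff, Avoids, not_iff_not]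
  exact ⟨exists_plateau_of_contains_p3421 π h132,
    fun ⟨_, _, _, hii', heq, hlt, hpos⟩ => contains_p3421_of_plateau π h132 hii' heq hlt hpos⟩

/-- Let `π` be an indecomposable 132-avoiding permutation and `λ = Λ(π)` the partition
given by its Lehmer code (here `lehmerExt π`, with `λ_i = 0` beyond the parts).  Then `π`
avoids 3421 if and only if every part of `λ`, except possibly the smallest part size, has
multiplicity one; equivalently, there are no indices `i`, `j` with
`λ_i = λ_{i+1} > λ_j > 0`. -/
theorem avoids_3421_iff (n : ℕ) (π : Equiv.Perm (Fin n))
    (hind : Indecomposable π) (h132 : Avoids π p132) :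
    Avoids π p3421 ↔
      ¬ ∃ i j : ℕ, lehmerExt π i = lehmerExt π (i + 1) ∧
        lehmerExt π j < lehmerExt π i ∧ 0 < lehmerExt π j :=
  avoids_3421_iff_general n π h132
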